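/- Let C be a compact convex subset of ℝ² with nonempty interior. Then there exist a rectangle r centered at the origin and a point z ∈ ℝ² such that z + r ⊆ C ⊆ z + 5·r. -/

import Mathlib

open MeasureTheory Pointwise

noncomputable section

abbrev Plane := EuclideanSpace ℝ (Fin 2)

/-- A rectangle centered at the origin: all points `s₁ • u + s₂ • v` with
`|s₁| ≤ a`, `|s₂| ≤ b`, for an orthonormal pair `u, v` and positive `a, b`. -/
def IsOriginRectangle (r : Set Plane) : Prop :=
  ∃ (u v : Plane) (a b : ℝ), ‖u‖ = 1 ∧ ‖v‖ = 1 ∧ (inner ℝ u v : ℝ) = 0 ∧ 0 < a ∧ 0 < b ∧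
    r = {p : Plane | ∃ s₁ s₂ : ℝ, |s₁| ≤ a ∧ |s₂| ≤ b ∧ p = s₁ • u + s₂ • v}

/-!
Take a diametral pair `p, q` of `C`, with `d = dist p q` and `u` the unit vector from `p` to `q`,
and a unit normal `v` oriented so that a point `w` of `C` farthest from the line `pq` lies at
height `M > 0`. The balls of radius `d` about `p` and `q` confine `C` to the box
`p + [0, d] u + [-M, M] v`, while the triangle `p q w ⊆ C` contains the rectangle with half-sides
`d / 4`, `M / 4` standing on the lower half of the triangle. Dilating this rectangle by `5` about
its centre covers the box.
-/

open Set Module Filter Topology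
open scoped RealInnerProductSpace

section Box
variable {E : Type*} [AddCommGroup E] [Module ℝ E]

def centeredBox (u v : E) (a b : ℝ) : Set E :=
  {p | ∃ s₁ s₂ : ℝ, |s₁| ≤ a ∧ |s₂| ≤ b ∧ p = s₁ • u + s₂ • v}

theorem centeredBox_mul_subset_smul {c : ℝ} (hc : 0 < c) (u v : E) (a b : ℝ) :
    centeredBox u v (c * a) (c * b) ⊆ c • centeredBox u v a b := by
  rintro _ ⟨s₁, s₂, h₁, h₂, rfl⟩
  refine ⟨(s₁ / c) • u + (s₂ / c) • v, ⟨s₁ / c, s₂ / c, ?_, ?_, rfl⟩, ?_⟩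
  · rwa [abs_div, abs_of_pos hc, div_le_iff₀' hc]
  · rwa [abs_div, abs_of_pos hc, div_le_iff₀' hc]
  · match_scalars <;> field_simp

theorem Convex.add_smul_add_smul_mem {C : Set E} (hC : Convex ℝ C) {p x y : E} (hp : p ∈ C)
    (hx : p + x ∈ C) (hy : p + y ∈ C) {s t : ℝ} (hs : 0 ≤ s) (ht : 0 ≤ t) (hst : s + t ≤ 1) :
    p + (s • x + t • y) ∈ C := by
  have h := hC.sum_mem (t := Finset.univ) (w := ![1 - (s + t), s, t]) (z := ![p, p + x, p + y])
    (by simpa [Fin.forall_fin_succ, hs, ht] using hst) (by simp [Fin.sum_univ_three, add_assoc])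
    (by simp [Fin.forall_fin_succ, hp, hx, hy])
  convert h using 1
  simp only [Fin.sum_univ_three, Matrix.cons_val_zero, Matrix.cons_val_one, Matrix.cons_val_two,
    Matrix.head_cons, Matrix.tail_cons]
  module

theorem Convex.vadd_centeredBox_subset {C : Set E} (hC : Convex ℝ C) {p u v : E} {a d M : ℝ}
    (hd : 0 < d) (hM : 0 < M) (ha : a ∈ Icc 0 d)
    (hp : p ∈ C) (hq : p + d • u ∈ C) (hw : p + (a • u + M • v) ∈ C) :
    (p + ((d / 4 + a / 2) • u + (M / 4) • v)) +ᵥ centeredBox u v (d / 4) (M / 4) ⊆ C := by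
  rintro _ ⟨_, ⟨s₁, s₂, h₁, h₂, rfl⟩, rfl⟩
  rw [abs_le] at h₁ h₂
  obtain ⟨ha₀, had⟩ := ha
  -- barycentric weights of `p + d • u` and `p + (a • u + M • v)` in the triangle
  set t := (M / 4 + s₂) / M
  set s := (d / 4 + a / 2 + s₁ - t * a) / d
  have htM : t * M = M / 4 + s₂ := div_mul_cancel₀ _ hM.ne'
  have hsd : s * d = d / 4 + a / 2 + s₁ - t * a := div_mul_cancel₀ _ hd.ne'
  have ht₀ : 0 ≤ t := div_nonneg (by linarith) hM.le
  have ht₁ : t ≤ 1 / 2 := by rw [div_le_iff₀ hM]; linarith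
  have hs₀ : 0 ≤ s := div_nonneg (by nlinarith) hd.le
  have hst : s + t ≤ 1 := by nlinarith
  convert hC.add_smul_add_smul_mem hp hq hw hs₀ ht₀ hst using 1
  simp only [vadd_eq_add]
  match_scalars <;> linarith

theorem add_smul_add_smul_mem_vadd_smul_centeredBox {p u v : E} {a d M α β : ℝ}
    (ha : a ∈ Icc 0 d) (hα : α ∈ Icc 0 d) (hβ : |β| ≤ M) :
    p + (α • u + β • v) ∈
      (p + ((d / 4 + a / 2) • u + (M / 4) • v)) +ᵥ (5 : ℝ) • centeredBox u v (d / 4) (M / 4) := by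
  obtain ⟨ha₀, had⟩ := ha
  obtain ⟨hα₀, hαd⟩ := hα
  obtain ⟨hβ₀, hβM⟩ := abs_le.1 hβ
  have hbox : (α - d / 4 - a / 2) • u + (β - M / 4) • v ∈
      centeredBox u v (5 * (d / 4)) (5 * (M / 4)) :=
    ⟨_, _, abs_le.2 ⟨by linarith, by linarith⟩, abs_le.2 ⟨by linarith, by linarith⟩, rfl⟩
  convert vadd_mem_vadd_set (centeredBox_mul_subset_smul (by norm_num) u v _ _ hbox) using 1
  rw [vadd_eq_add]
  module

theorem Convex.exists_vadd_centeredBox_subset_and_subset_vadd_smul {C : Set E}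
    (hC : Convex ℝ C) {p u v : E} {a d M : ℝ} (hd : 0 < d) (hM : 0 < M) (ha : a ∈ Icc 0 d)
    (hp : p ∈ C) (hq : p + d • u ∈ C) (hw : p + (a • u + M • v) ∈ C)
    (hcoord : ∀ x ∈ C, ∃ α ∈ Icc 0 d, ∃ β, |β| ≤ M ∧ x = p + (α • u + β • v)) :
    ∃ z : E, z +ᵥ centeredBox u v (d / 4) (M / 4) ⊆ C ∧
      C ⊆ z +ᵥ (5 : ℝ) • centeredBox u v (d / 4) (M / 4) := by
  refine ⟨_, hC.vadd_centeredBox_subset hd hM ha hp hq hw, fun x hx ↦ ?_⟩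
  obtain ⟨α, hα, β, hβ, rfl⟩ := hcoord x hx
  exact add_smul_add_smul_mem_vadd_smul_centeredBox ha hα hβ

end Box

theorem Set.nontrivial_of_nonempty_interior {X : Type*} [TopologicalSpace X]
    [∀ x : X, NeBot (𝓝[≠] x)] {s : Set X} (h : (interior s).Nonempty) : s.Nontrivial := by
  obtain ⟨x, hx⟩ := h
  refine (eq_singleton_or_nontrivial (interior_subset hx)).resolve_left ?_
  rintro rfl
  simp at hx

theorem IsCompact.exists_forall_dist_le_dist {X : Type*} [PseudoMetricSpace X] {C : Set X}
    (hC : IsCompact C) (hne : C.Nonempty) :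
    ∃ p ∈ C, ∃ q ∈ C, ∀ x ∈ C, ∀ y ∈ C, dist x y ≤ dist p q := by
  obtain ⟨⟨p, q⟩, ⟨hp, hq⟩, hmax⟩ :=
    (hC.prod hC).exists_isMaxOn (hne.prod hne) continuous_dist.continuousOn
  exact ⟨p, hp, q, hq, fun x hx y hy ↦ hmax (mk_mem_prod hx hy)⟩

section InnerProduct
variable {E : Type*} [NormedAddCommGroup E] [InnerProductSpace ℝ E]

theorem eq_inner_smul_add_inner_smul_of_finrank_eq_two (h2 : finrank ℝ E = 2) {u v : E}
    (hu : ‖u‖ = 1) (hv : ‖v‖ = 1) (huv : ⟪u, v⟫ = 0) (x : E) : x = ⟪u, x⟫ • u + ⟪v, x⟫ • v := by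
  have hon : Orthonormal ℝ ![u, v] := by
    rw [orthonormal_iff_ite]
    intro i j
    fin_cases i <;> fin_cases j <;> simp [hu, hv, huv, real_inner_comm]
  let b := OrthonormalBasis.mk hon
    (hon.linearIndependent.span_eq_top_of_card_eq_finrank (by simp [h2])).ge
  simpa [b, Fin.sum_univ_two] using (b.sum_repr' x).symm

theorem exists_norm_eq_inner_eq_zero_of_finrank_eq_two (h2 : finrank ℝ E = 2) (u : E) :
    ∃ v : E, ‖v‖ = ‖u‖ ∧ ⟪u, v⟫ = 0 := by
  have : Fact (finrank ℝ E = 2) := ⟨h2⟩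
  have : FiniteDimensional ℝ E := .of_fact_finrank_eq_two
  let o : Orientation ℝ E (Fin 2) := (Module.finBasisOfFinrankEq ℝ E h2).orientation
  exact ⟨o.rightAngleRotation u, by simp, by simp⟩

theorem inner_sub_mem_Icc_of_dist_le {p u x : E} {d : ℝ} (hu : ‖u‖ = 1) (hp : dist x p ≤ d)
    (hq : dist x (p + d • u) ≤ d) : ⟪u, x - p⟫ ∈ Icc 0 d := by
  have hsplit : ⟪u, x - p⟫ = d + ⟪u, x - (p + d • u)⟫ := by
    rw [inner_sub_right, inner_sub_right, inner_add_right, inner_smul_right,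
      real_inner_self_eq_norm_sq, hu]
    ring
  have hlow := neg_le_of_abs_le (abs_real_inner_le_norm u (x - (p + d • u)))
  have hup := real_inner_le_norm u (x - p)
  rw [hu, one_mul, ← dist_eq_norm] at hlow hup
  constructor <;> linarith

theorem IsCompact.exists_abs_inner_sub_le {C : Set E} (hC : IsCompact C) (hne : C.Nonempty)
    (p v₀ : E) : ∃ v, (v = v₀ ∨ v = -v₀) ∧ ∃ w ∈ C, ∀ x ∈ C, |⟪v, x - p⟫| ≤ ⟪v, w - p⟫ := by
  obtain ⟨w, hw, hmax⟩ := hC.exists_isMaxOn hne (f := fun x ↦ |⟪v₀, x - p⟫|) (by fun_prop)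
  rcases le_total 0 ⟪v₀, w - p⟫ with h | h
  · exact ⟨v₀, .inl rfl, w, hw, fun x hx ↦ (hmax hx).trans_eq (abs_of_nonneg h)⟩
  · refine ⟨-v₀, .inr rfl, w, hw, fun x hx ↦ ?_⟩
    simpa [inner_neg_left, abs_of_nonpos h] using hmax hx

theorem inner_sub_lt_of_mem_interior {C : Set E} {x₀ p v : E} {M : ℝ} (hx₀ : x₀ ∈ interior C)
    (hv : v ≠ 0) (hC : ∀ x ∈ C, ⟪v, x - p⟫ ≤ M) : ⟪v, x₀ - p⟫ < M := by
  have hline : Tendsto (fun t : ℝ ↦ x₀ + t • v) (𝓝[>] 0) (𝓝 x₀) := by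
    have : Continuous fun t : ℝ ↦ x₀ + t • v := by fun_prop
    simpa using (this.tendsto 0).mono_left nhdsWithin_le_nhds
  obtain ⟨t, hxt, ht⟩ :=
    ((hline.eventually (mem_interior_iff_mem_nhds.1 hx₀)).and self_mem_nhdsWithin).exists
  have hstep := hC _ hxt
  rw [show x₀ + t • v - p = x₀ - p + t • v by abel, inner_add_right, inner_smul_right,
    real_inner_self_eq_norm_sq] at hstep
  have : 0 < t * ‖v‖ ^ 2 := mul_pos ht (by positivity)
  linarith

theorem pos_of_forall_abs_inner_sub_le {C : Set E} {p v : E} {M : ℝ}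
    (hint : (interior C).Nonempty) (hv : v ≠ 0) (hC : ∀ x ∈ C, |⟪v, x - p⟫| ≤ M) : 0 < M := by
  obtain ⟨x₀, hx₀⟩ := hint
  have h₁ := inner_sub_lt_of_mem_interior hx₀ hv fun x hx ↦ (le_abs_self _).trans (hC x hx)
  have h₂ := inner_sub_lt_of_mem_interior hx₀ (neg_ne_zero.2 hv) fun x hx ↦ by
    rw [inner_neg_left]
    exact (neg_le_abs _).trans (hC x hx)
  rw [inner_neg_left] at h₂
  linarith

end InnerProduct

theorem rect_approx (C : Set Plane) (hC : IsCompact C) (hconv : Convex ℝ C)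
    (hint : (interior C).Nonempty) :
    ∃ (r : Set Plane) (z : Plane), IsOriginRectangle r ∧
      z +ᵥ r ⊆ C ∧ C ⊆ z +ᵥ ((5 : ℝ) • r) := by
  have hne : C.Nonempty := hint.mono interior_subset
  obtain ⟨p, hp, q, hq, hdiam⟩ := hC.exists_forall_dist_le_dist hne
  set d := dist p q
  have hd : 0 < d := by
    obtain ⟨x, hx, y, hy, hxy⟩ := Set.nontrivial_of_nonempty_interior hint
    exact (dist_pos.2 hxy).trans_le (hdiam x hx y hy)
  set u := d⁻¹ • (q - p)
  have hu : ‖u‖ = 1 := by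
    rw [norm_smul, ← dist_eq_norm, dist_comm, norm_inv, Real.norm_of_nonneg hd.le,
      inv_mul_cancel₀ hd.ne']
  have hq' : p + d • u = q := by
    rw [smul_smul, mul_inv_cancel₀ hd.ne', one_smul, add_sub_cancel]
  have hstrip (x : Plane) (hx : x ∈ C) : ⟪u, x - p⟫ ∈ Icc 0 d :=
    inner_sub_mem_Icc_of_dist_le hu (hdiam x hx p hp) (hq' ▸ hdiam x hx q hq)
  obtain ⟨v₀, hv₀, huv₀⟩ :=
    exists_norm_eq_inner_eq_zero_of_finrank_eq_two finrank_euclideanSpace_fin u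
  obtain ⟨v, hvv₀, w, hw, hwmax⟩ := hC.exists_abs_inner_sub_le hne p v₀
  obtain ⟨hv, huv⟩ : ‖v‖ = 1 ∧ ⟪u, v⟫ = 0 := by rcases hvv₀ with rfl | rfl <;> simp [*]
  have hM := pos_of_forall_abs_inner_sub_le hint (norm_ne_zero_iff.1 (hv ▸ one_ne_zero)) hwmax
  have hexp (x : Plane) : x = p + (⟪u, x - p⟫ • u + ⟪v, x - p⟫ • v) := by
    rw [← eq_inner_smul_add_inner_smul_of_finrank_eq_two finrank_euclideanSpace_fin hu hv huv,
      add_sub_cancel]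
  obtain ⟨z, hin, hout⟩ := hconv.exists_vadd_centeredBox_subset_and_subset_vadd_smul hd hM
    (hstrip w hw) hp (hq' ▸ hq) (by rwa [← hexp w])
    fun x hx ↦ ⟨_, hstrip x hx, _, hwmax x hx, hexp x⟩
  exact ⟨_, z, ⟨u, v, _, _, hu, hv, huv, by positivity, by positivity, rfl⟩, hin, hout⟩
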